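/- arXiv:math/0703675 — 3 statements merged into one kernel-verified Lean document; each statement's English description precedes it below -/
import Mathlib

section
/- Suppose the measurable map M : Ω → (d×d matrices) takes values in the set of stochastic matrices, and that p({ω : all entries of M(ω) are strictly positive}) > 0. Then there exist α > 0, a measurable set Ω₄ ⊆ Ω^{ℕ*} with ℙ(Ω₄) = 1, and a measurable vector-valued map η_∞ : Ω^{ℕ*} → ℂ^d such that for every ω̄ ∈ Ω₄ there is a constant C_ω̄ with: for all n ≥ 1, ‖M(ωₙ) M(ω_{n−1}) ⋯ M(ω₁) − |ψ_S⟩⟨η_∞(ω̄)|‖ ≤ C_ω̄ e^{−α n}. -/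
open MeasureTheory Filter Matrix
open scoped BigOperators

namespace RRDO

/-- Euclidean inner product on `Fin d → ℂ`, antilinear in the first argument. -/
noncomputable def einner {d : ℕ} (φ χ : Fin d → ℂ) : ℂ :=
  ∑ i, starRingEnd ℂ (φ i) * χ i

/-- Euclidean norm on `Fin d → ℂ`. -/
noncomputable def evnorm {d : ℕ} (v : Fin d → ℂ) : ℝ :=
  Real.sqrt (∑ i, ‖v i‖ ^ 2)

/-- The rank-one operator `|ψ⟩⟨φ|`, sending `χ` to `⟨φ, χ⟩ ψ`. -/
noncomputable def ketbra {d : ℕ} (ψ φ : Fin d → ℂ) : Matrix (Fin d) (Fin d) ℂ :=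
  Matrix.of fun i j => ψ i * starRingEnd ℂ (φ j)

/-- Operator norm of a matrix induced by the Euclidean vector norm. -/
noncomputable def opNorm {d : ℕ} (A : Matrix (Fin d) (Fin d) ℂ) : ℝ :=
  ⨆ v : {v : Fin d → ℂ // evnorm v ≤ 1}, evnorm (A.mulVec v)

/-- The spectral projection of `M` for the eigenvalue 1: the projection onto
`ker ((M-1)^d)` along `range ((M-1)^d)`. -/
noncomputable def specProj {d : ℕ} (M : Matrix (Fin d) (Fin d) ℂ) :
    Matrix (Fin d) (Fin d) ℂ :=
  letI := Classical.dec (IsCompl (LinearMap.ker ((M - 1) ^ d).mulVecLin)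
      (LinearMap.range ((M - 1) ^ d).mulVecLin))
  if h : IsCompl (LinearMap.ker ((M - 1) ^ d).mulVecLin)
      (LinearMap.range ((M - 1) ^ d).mulVecLin) then
    LinearMap.toMatrix'
      ((LinearMap.ker ((M - 1) ^ d).mulVecLin).subtype ∘ₗ
        Submodule.linearProjOfIsCompl _ _ h)
  else 0

/-- The set `M_(E)` of matrices whose spectrum meets the unit circle exactly in `{1}`,
with `1` an eigenvalue of algebraic multiplicity one. -/
def MsetE (d : ℕ) : Set (Matrix (Fin d) (Fin d) ℂ) :=
  {M | spectrum ℂ M ∩ {z : ℂ | ‖z‖ = 1} = {1} ∧ M.charpoly.rootMultiplicity 1 = 1}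

/-- `ψ(M) = P₁(M)* ψS`. -/
noncomputable def psiv {d : ℕ} (ψS : Fin d → ℂ) (A : Matrix (Fin d) (Fin d) ℂ) :
    Fin d → ℂ :=
  ((specProj A)ᴴ).mulVec ψS

/-- `M_Q = Q M Q` where `Q = 1 - |ψS⟩⟨ψ(M)|`. -/
noncomputable def MQm {d : ℕ} (ψS : Fin d → ℂ) (A : Matrix (Fin d) (Fin d) ℂ) :
    Matrix (Fin d) (Fin d) ℂ :=
  (1 - ketbra ψS (psiv ψS A)) * A * (1 - ketbra ψS (psiv ψS A))

/-- The ordered product `A 0 * A 1 * ⋯ * A (n-1)`. -/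
noncomputable def fwdProd {d : ℕ} (A : ℕ → Matrix (Fin d) (Fin d) ℂ) (n : ℕ) :
    Matrix (Fin d) (Fin d) ℂ :=
  ((List.range n).map A).prod

/-- The reversed ordered product `A (n-1) * ⋯ * A 1 * A 0`. -/
noncomputable def bwdProd {d : ℕ} (A : ℕ → Matrix (Fin d) (Fin d) ℂ) (n : ℕ) :
    Matrix (Fin d) (Fin d) ℂ :=
  (((List.range n).reverse).map A).prod

/-- `thetaSeq A ψS n` is `θ_{n+1} = A(n)* ⋯ A(1)* ψ(A 0)` (0-indexed). -/
noncomputable def thetaSeq {d : ℕ} (A : ℕ → Matrix (Fin d) (Fin d) ℂ) (ψS : Fin d → ℂ) :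
    ℕ → (Fin d → ℂ)
  | 0 => psiv ψS (A 0)
  | n + 1 => ((A (n + 1))ᴴ).mulVec (thetaSeq A ψS n)

/-- `P` is the infinite i.i.d. product measure built from `p` on sequence space. -/
def IsIIDproduct {Ω : Type*} [MeasurableSpace Ω] (p : Measure Ω)
    (P : Measure (ℕ → Ω)) : Prop :=
  ∀ (n : ℕ) (A : ℕ → Set Ω), (∀ i, MeasurableSet (A i)) →
    P {ω' : ℕ → Ω | ∀ i < n, ω' i ∈ A i} = ∏ i ∈ Finset.range n, p (A i)

/-- Entrywise expectation of a random matrix. -/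
noncomputable def Ematrix {Ω : Type*} [MeasurableSpace Ω] (p : Measure Ω) {d : ℕ}
    (M : Ω → Matrix (Fin d) (Fin d) ℂ) : Matrix (Fin d) (Fin d) ℂ :=
  Matrix.of fun i j => ∫ ω, M ω i j ∂p

/-- Entrywise expectation of a random vector. -/
noncomputable def Evec {Ω : Type*} [MeasurableSpace Ω] (p : Measure Ω) {d : ℕ}
    (v : Ω → Fin d → ℂ) : Fin d → ℂ :=
  fun i => ∫ ω, v ω i ∂p

/-- Assumption (RE) with constants `C, α`. -/
def AssumptionRE {Ω : Type*} [MeasurableSpace Ω] {d : ℕ}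
    (M : Ω → Matrix (Fin d) (Fin d) ℂ) (ψS : Fin d → ℂ)
    (P : Measure (ℕ → Ω)) (C α : ℝ) : Prop :=
  0 < C ∧ 0 < α ∧ ∃ Ωt : Set (ℕ → Ω), MeasurableSet Ωt ∧ P Ωt = 1 ∧
    ∀ ω' ∈ Ωt,
      (∃ n₀ : ℕ, ∀ n ≥ n₀,
        opNorm (fwdProd (fun i => MQm ψS (M (ω' i))) n) ≤ C * Real.exp (-α * n)) ∧
      ∀ n : ℕ, opNorm (fwdProd (fun i => MQm ψS (M (ω' i))) n) ≤ C

/-!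
Write `P_n = M(ω_n) ⋯ M(ω_1)`. Each row of `P_n` is a convex combination of the rows of
`P_{n-1}`, so the oscillation of every column does not grow, and it shrinks by the factor `1 - ε`
when all entries of `M(ω_n)` are at least `ε` (Dobrushin). With `ε_n = ∏_{ij} M(ω_n)_{ij}` the
oscillation of `P_n` is at most `exp (-∑_{k ≤ n} ε_k)`, and all rows of `P_n` converge at that rate
to one row `ρ`, that is `P_n → |ψ_S⟩⟨√d ρ|`. By the strong law of large numbers,
`∑_{k ≤ n} ε_k ≥ n 𝔼[ε] / 2` for large `n` almost surely, and `𝔼[ε] > 0` because `ε > 0` with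
positive probability.
-/

open ProbabilityTheory Finset
open scoped Topology

section Stochastic

variable {ι : Type*} [Fintype ι] [DecidableEq ι]

lemma mulVec_apply_mem_of_mem_rowStochastic {A : Matrix ι ι ℝ} (hA : A ∈ rowStochastic ℝ ι)
    {s : Set ℝ} (hs : Convex ℝ s) {x : ι → ℝ} (hx : ∀ k, x k ∈ s) (i : ι) : (A *ᵥ x) i ∈ s :=
  hs.sum_mem (fun _ _ => nonneg_of_mem_rowStochastic hA) (sum_row_of_mem_rowStochastic hA i)
    fun k _ => hx k

lemma mulVec_sub_mulVec_le_of_mem_rowStochastic {A : Matrix ι ι ℝ}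
    (hA : A ∈ rowStochastic ℝ ι) {ε D : ℝ} (hε : ∀ i j, ε ≤ A i j) {x : ι → ℝ}
    (hx : ∀ k k', x k - x k' ≤ D) (i i' : ι) :
    (A *ᵥ x) i - (A *ᵥ x) i' ≤ (1 - ε) * D := by
  have : Nonempty ι := ⟨i⟩
  obtain ⟨k₀, hk₀⟩ := Finite.exists_min x
  have hD : 0 ≤ D := by simpa using hx k₀ k₀
  -- centring `x` at its minimum shifts both sides by `x k₀`, as the row sums are 1
  have hcentre : ∀ i, (A *ᵥ x) i = ∑ k, A i k * (x k - x k₀) + x k₀ := fun i => by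
    simp [mulVec, dotProduct, mul_sub, ← sum_mul, sum_row_of_mem_rowStochastic hA i]
  have hupper : ∑ k, A i k * (x k - x k₀) ≤ (1 - ε) * D :=
    calc ∑ k, A i k * (x k - x k₀) = D - ∑ k, A i k * (D - (x k - x k₀)) := by
          simp [mul_sub, ← sum_mul, sum_row_of_mem_rowStochastic hA i]
      _ ≤ D - A i k₀ * (D - (x k₀ - x k₀)) := by
          gcongr
          exact single_le_sum (f := fun k => A i k * (D - (x k - x k₀)))
            (fun k _ => mul_nonneg (nonneg_of_mem_rowStochastic hA) (by linarith [hx k k₀]))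
            (mem_univ k₀)
      _ ≤ (1 - ε) * D := by nlinarith [hε i k₀]
  have hlower : 0 ≤ ∑ k, A i' k * (x k - x k₀) :=
    sum_nonneg fun k _ => mul_nonneg (nonneg_of_mem_rowStochastic hA) (by linarith [hk₀ k])
  rw [hcentre i, hcentre i']
  linarith

lemma map_re_mem_rowStochastic {A : Matrix ι ι ℂ}
    (hA : (∀ i j, (A i j).im = 0 ∧ 0 ≤ (A i j).re) ∧ ∀ i, ∑ j, A i j = 1) :
    A.map Complex.re ∈ rowStochastic ℝ ι :=
  mem_rowStochastic_iff_sum.2 ⟨fun i j => (hA.1 i j).2, fun i => by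
    simpa [Complex.re_sum] using congrArg Complex.re (hA.2 i)⟩

end Stochastic

lemma map_re_map_ofReal {ι κ : Type*} {A : Matrix ι κ ℂ} (hA : ∀ i j, (A i j).im = 0) :
    (A.map Complex.re).map (↑) = A := by
  ext i j
  exact Complex.ext rfl (by simpa using (hA i j).symm)

section RevProd

variable {N : Type*} [Monoid N]

/-- `bwdProd` is `revProd` for complex matrices. -/
def revProd (B : ℕ → N) (n : ℕ) : N :=
  (((List.range n).reverse).map B).prod

@[simp] lemma revProd_zero (B : ℕ → N) : revProd B 0 = 1 := rfl

lemma revProd_succ (B : ℕ → N) (n : ℕ) : revProd B (n + 1) = B n * revProd B n := by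
  simp [revProd, List.range_succ]

lemma map_revProd {N' F : Type*} [Monoid N'] [FunLike F N N'] [MonoidHomClass F N N'] (f : F)
    (B : ℕ → N) (n : ℕ) : f (revProd B n) = revProd (fun k => f (B k)) n := by
  simp [revProd, map_list_prod, Function.comp_def]

end RevProd

section Oscillation

variable {ι : Type*} [Fintype ι] [DecidableEq ι]

lemma revProd_apply_sub_le_exp {B : ℕ → Matrix ι ι ℝ} (hB : ∀ n, B n ∈ rowStochastic ℝ ι)
    {ε : ℕ → ℝ} (hε : ∀ n i j, ε n ≤ B n i j) (n : ℕ) (i i' j : ι) :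
    revProd B n i j - revProd B n i' j ≤ Real.exp (-∑ k ∈ range n, ε k) := by
  induction n generalizing i i' with
  | zero => by_cases i = j <;> by_cases i' = j <;> simp_all [one_apply]
  | succ n ih =>
    calc revProd B (n + 1) i j - revProd B (n + 1) i' j
        ≤ (1 - ε n) * Real.exp (-∑ k ∈ range n, ε k) := by
          rw [revProd_succ]
          exact mulVec_sub_mulVec_le_of_mem_rowStochastic (hB n) (hε n)
            (x := fun k => revProd B n k j) (fun k k' => ih k k') i i'
      _ ≤ Real.exp (-ε n) * Real.exp (-∑ k ∈ range n, ε k) := by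
          gcongr
          linarith [Real.add_one_le_exp (-ε n)]
      _ = Real.exp (-∑ k ∈ range (n + 1), ε k) := by
          rw [← Real.exp_add, sum_range_succ]
          ring_nf

lemma abs_revProd_apply_sub_le_exp {B : ℕ → Matrix ι ι ℝ} (hB : ∀ n, B n ∈ rowStochastic ℝ ι)
    {ε : ℕ → ℝ} (hε : ∀ n i j, ε n ≤ B n i j) {n m : ℕ} (hnm : n ≤ m) (i i' j : ι) :
    |revProd B m i j - revProd B n i' j| ≤ Real.exp (-∑ k ∈ range n, ε k) := by
  induction m, hnm using Nat.le_induction generalizing i with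
  | base =>
    exact abs_sub_le_iff.2
      ⟨revProd_apply_sub_le_exp hB hε n i i' j, revProd_apply_sub_le_exp hB hε n i' i j⟩
  | succ m _ ih =>
    rw [revProd_succ, ← Real.dist_eq, ← Metric.mem_closedBall]
    exact mulVec_apply_mem_of_mem_rowStochastic (hB m) (convex_closedBall _ _)
      (x := fun k => revProd B m k j) (fun k => ih k) i

lemma abs_liminf_sub_le {u : ℕ → ℝ} {c D : ℝ} (h : ∀ᶠ m in atTop, |u m - c| ≤ D) :
    |liminf u atTop - c| ≤ D := by
  have hlo : ∀ᶠ m in atTop, c - D ≤ u m := h.mono fun m hm => by linarith [abs_le.1 hm]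
  have hhi : ∀ᶠ m in atTop, u m ≤ c + D := h.mono fun m hm => by linarith [abs_le.1 hm]
  have h₁ : c - D ≤ liminf u atTop :=
    le_liminf_of_le (isBoundedUnder_of_eventually_le hhi).isCoboundedUnder_ge hlo
  have h₂ : liminf u atTop ≤ c + D :=
    liminf_le_of_le (isBoundedUnder_of_eventually_ge hlo) fun b hb => by
      obtain ⟨m, hbm, hmc⟩ := (hb.and hhi).exists
      linarith
  exact abs_le.2 ⟨by linarith, by linarith⟩

/-- The common row of `lim revProd B n`, read off the diagonal so that no row index has to be
chosen (any row would do). -/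
noncomputable def limitRow (B : ℕ → Matrix ι ι ℝ) (j : ι) : ℝ :=
  liminf (fun m => revProd B m j j) atTop

theorem abs_revProd_apply_sub_limitRow_le {B : ℕ → Matrix ι ι ℝ}
    (hB : ∀ n, B n ∈ rowStochastic ℝ ι) {ε : ℕ → ℝ} (hε : ∀ n i j, ε n ≤ B n i j)
    (n : ℕ) (i j : ι) :
    |revProd B n i j - limitRow B j| ≤ Real.exp (-∑ k ∈ range n, ε k) := by
  rw [abs_sub_comm]
  refine abs_liminf_sub_le ?_
  filter_upwards [eventually_ge_atTop n] with m hm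
  exact abs_revProd_apply_sub_le_exp hB hε hm j i j

end Oscillation

lemma measurable_revProd_apply {ι X : Type*} [Fintype ι] [DecidableEq ι] [MeasurableSpace X]
    {B : ℕ → X → Matrix ι ι ℝ} (hB : ∀ n i j, Measurable fun x => B n x i j) (n : ℕ) (i j : ι) :
    Measurable fun x => revProd (fun k => B k x) n i j := by
  induction n generalizing i j with
  | zero => simpa only [revProd_zero] using measurable_const
  | succ n ih =>
    simp only [revProd_succ, mul_apply]
    exact Finset.measurable_sum _ fun k _ => (hB n i k).mul (ih k j)

section OperatorNorm

variable {d : ℕ}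

lemma opNorm_nonneg (A : Matrix (Fin d) (Fin d) ℂ) : 0 ≤ opNorm A :=
  Real.iSup_nonneg fun _ => Real.sqrt_nonneg _

lemma norm_apply_le_evnorm (v : Fin d → ℂ) (j : Fin d) : ‖v j‖ ≤ evnorm v := by
  rw [evnorm, ← Real.sqrt_sq (norm_nonneg (v j))]
  exact Real.sqrt_le_sqrt
    (single_le_sum (f := fun i => ‖v i‖ ^ 2) (fun i _ => sq_nonneg _) (mem_univ j))

lemma evnorm_le_of_norm_apply_le {v : Fin d → ℂ} {c : ℝ} (hc : 0 ≤ c) (h : ∀ i, ‖v i‖ ≤ c) :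
    evnorm v ≤ Real.sqrt d * c := by
  calc evnorm v ≤ Real.sqrt (∑ _i : Fin d, c ^ 2) :=
        Real.sqrt_le_sqrt (sum_le_sum fun i _ => pow_le_pow_left₀ (norm_nonneg _) (h i) 2)
    _ = Real.sqrt d * c := by
        rw [sum_const, card_univ, Fintype.card_fin, nsmul_eq_mul, Real.sqrt_mul (Nat.cast_nonneg d),
          Real.sqrt_sq hc]

lemma opNorm_le_of_norm_apply_le {A : Matrix (Fin d) (Fin d) ℂ} {c : ℝ} (hc : 0 ≤ c)
    (h : ∀ i j, ‖A i j‖ ≤ c) : opNorm A ≤ d * Real.sqrt d * c := by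
  refine Real.iSup_le (fun ⟨v, hv⟩ => ?_) (by positivity)
  have hrow : ∀ i, ‖(A *ᵥ v) i‖ ≤ d * c := fun i =>
    calc ‖∑ j, A i j * v j‖ ≤ ∑ j, ‖A i j * v j‖ := norm_sum_le _ _
      _ ≤ ∑ _j : Fin d, c := sum_le_sum fun j _ => by
          rw [norm_mul]
          nlinarith [h i j, norm_nonneg (A i j), norm_nonneg (v j),
            (norm_apply_le_evnorm v j).trans hv]
      _ = d * c := by simp
  calc evnorm (A *ᵥ v) ≤ Real.sqrt d * (d * c) := evnorm_le_of_norm_apply_le (by positivity) hrow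
    _ = d * Real.sqrt d * c := by ring

end OperatorNorm

section Limit

variable {d : ℕ}

lemma bwdProd_map_ofReal (B : ℕ → Matrix (Fin d) (Fin d) ℝ) (n : ℕ) :
    bwdProd (fun k => (B k).map (↑)) n = (revProd B n).map (↑) :=
  (map_revProd Complex.ofRealHom.mapMatrix B n).symm

/-- The vector `η_∞` of the paper: `|ψ_S⟩⟨η_∞|` is the matrix all of whose rows are
`limitRow B`. -/
noncomputable def etaInfty (B : ℕ → Matrix (Fin d) (Fin d) ℝ) : Fin d → ℂ :=
  fun j => ((Real.sqrt d * limitRow B j : ℝ) : ℂ)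

lemma measurable_etaInfty {X : Type*} [MeasurableSpace X]
    {B : ℕ → X → Matrix (Fin d) (Fin d) ℝ} (hB : ∀ n i j, Measurable fun x => B n x i j)
    (j : Fin d) :
    Measurable fun x => etaInfty (fun k => B k x) j :=
  Complex.measurable_ofReal.comp <|
    (Measurable.liminf fun m => measurable_revProd_apply hB m j j).const_mul _

lemma ketbra_etaInfty_apply (B : ℕ → Matrix (Fin d) (Fin d) ℝ) (i j : Fin d) :
    ketbra (fun _ => ((Real.sqrt d : ℝ) : ℂ)⁻¹) (etaInfty B) i j = limitRow B j := by
  have : Real.sqrt d ≠ 0 := by simpa using i.pos.ne'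
  simp [ketbra, etaInfty, this]

theorem opNorm_bwdProd_sub_ketbra_le {B : ℕ → Matrix (Fin d) (Fin d) ℝ}
    (hB : ∀ n, B n ∈ rowStochastic ℝ (Fin d)) {ε : ℕ → ℝ} (hε : ∀ n i j, ε n ≤ B n i j)
    (n : ℕ) :
    opNorm (bwdProd (fun k => (B k).map (↑)) n -
        ketbra (fun _ => ((Real.sqrt d : ℝ) : ℂ)⁻¹) (etaInfty B))
      ≤ d * Real.sqrt d * Real.exp (-∑ k ∈ range n, ε k) := by
  refine opNorm_le_of_norm_apply_le (Real.exp_pos _).le fun i j => ?_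
  rw [Matrix.sub_apply, bwdProd_map_ofReal, map_apply, ketbra_etaInfty_apply, ← Complex.ofReal_sub,
    Complex.norm_real, Real.norm_eq_abs]
  exact abs_revProd_apply_sub_limitRow_le hB hε n i j

end Limit

lemma exists_forall_le_mul_of_eventually_le {u v : ℕ → ℝ} (hu : ∀ n, 0 ≤ u n)
    (hv : ∀ n, 0 < v n) {K : ℝ} (h : ∀ᶠ n in atTop, u n ≤ K * v n) :
    ∃ C, ∀ n, u n ≤ C * v n := by
  have hO : u =O[atTop] v := Asymptotics.IsBigO.of_bound K <| h.mono fun n hn => by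
    rwa [Real.norm_of_nonneg (hu n), Real.norm_of_nonneg (hv n).le]
  obtain ⟨C, -, hC⟩ := Asymptotics.bound_of_isBigO_nat_atTop hO
  exact ⟨C, fun n => by
    simpa [Real.norm_of_nonneg (hu n), Real.norm_of_nonneg (hv n).le] using hC (hv n).ne'⟩

lemma eventually_mul_le_sum_of_tendsto {ε : ℕ → ℝ} {a α : ℝ}
    (ha : Tendsto (fun n => (∑ k ∈ range n, ε k) / n) atTop (𝓝 a)) (hα : α < a) :
    ∀ᶠ n : ℕ in atTop, α * n ≤ ∑ k ∈ range n, ε k := by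
  filter_upwards [ha.eventually_const_lt hα, eventually_gt_atTop 0] with n hn hn₀
  exact ((lt_div_iff₀ (by exact_mod_cast hn₀)).1 hn).le

theorem exists_opNorm_bwdProd_sub_ketbra_le {d : ℕ} {B : ℕ → Matrix (Fin d) (Fin d) ℝ}
    (hB : ∀ n, B n ∈ rowStochastic ℝ (Fin d)) {ε : ℕ → ℝ} (hε : ∀ n i j, ε n ≤ B n i j)
    {a α : ℝ} (ha : Tendsto (fun n => (∑ k ∈ range n, ε k) / n) atTop (𝓝 a)) (hα : α < a) :
    ∃ C, ∀ n : ℕ, opNorm (bwdProd (fun k => (B k).map (↑)) n -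
        ketbra (fun _ => ((Real.sqrt d : ℝ) : ℂ)⁻¹) (etaInfty B)) ≤ C * Real.exp (-α * n) := by
  refine exists_forall_le_mul_of_eventually_le (fun n => opNorm_nonneg _)
    (fun n => Real.exp_pos _) (K := d * Real.sqrt d) ?_
  filter_upwards [eventually_mul_le_sum_of_tendsto ha hα] with n hn
  refine (opNorm_bwdProd_sub_ketbra_le hB hε n).trans ?_
  gcongr
  linarith

namespace IsIIDproduct

variable {Ω : Type*} [MeasurableSpace Ω] {p : Measure Ω} [IsProbabilityMeasure p]
  {P : Measure (ℕ → Ω)}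

lemma measure_forall_mem (hP : IsIIDproduct p P) (s : Finset ℕ) {A : ℕ → Set Ω}
    (hA : ∀ i ∈ s, MeasurableSet (A i)) :
    P {ω | ∀ i ∈ s, ω i ∈ A i} = ∏ i ∈ s, p (A i) := by
  classical
  have hsub : s ⊆ range (s.sup id + 1) := fun i hi =>
    mem_range.2 (Nat.lt_succ_of_le (le_sup (f := id) hi))
  have key := hP (s.sup id + 1) (fun i => if i ∈ s then A i else Set.univ) fun i => by
    split_ifs with hi
    exacts [hA i hi, MeasurableSet.univ]
  have hset : {ω : ℕ → Ω | ∀ i < s.sup id + 1, ω i ∈ if i ∈ s then A i else Set.univ}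
      = {ω | ∀ i ∈ s, ω i ∈ A i} := by
    ext ω
    refine ⟨fun h i hi => by simpa [hi] using h i (mem_range.1 (hsub hi)), fun h i _ => ?_⟩
    split_ifs with hi
    exacts [h i hi, Set.mem_univ _]
  rw [hset] at key
  rw [key, prod_congr rfl fun i _ => apply_ite p _ _ _, measure_univ, prod_ite_mem,
    inter_eq_right.2 hsub]

lemma map_eval (hP : IsIIDproduct p P) (i : ℕ) : P.map (fun ω => ω i) = p := by
  ext A hA
  rw [Measure.map_apply (measurable_pi_apply i) hA]
  have key := hP.measure_forall_mem {i} (A := fun _ => A) fun _ _ => hA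
  simp only [mem_singleton, forall_eq, prod_singleton] at key
  exact key

lemma indepFun_eval (hP : IsIIDproduct p P) {i j : ℕ} (hij : i ≠ j) :
    IndepFun (fun ω => ω i) (fun ω => ω j) P := by
  rw [indepFun_iff_measure_inter_preimage_eq_mul]
  intro s t hs ht
  have key := hP.measure_forall_mem {i, j} (A := fun k => if k = i then s else t) fun k _ => by
    split_ifs
    exacts [hs, ht]
  rw [← Measure.map_apply (measurable_pi_apply i) hs,
    ← Measure.map_apply (measurable_pi_apply j) ht, hP.map_eval, hP.map_eval]
  simp only [mem_insert, mem_singleton, forall_eq_or_imp, forall_eq, if_pos, if_neg hij.symm,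
    prod_pair hij] at key
  exact key

theorem ae_tendsto_average (hP : IsIIDproduct p P) {f : Ω → ℝ} (hf : Measurable f)
    (hfi : Integrable f p) :
    ∀ᵐ ω ∂P, Tendsto (fun n : ℕ => (∑ k ∈ range n, f (ω k)) / n) atTop (𝓝 (∫ x, f x ∂p)) := by
  set X : ℕ → (ℕ → Ω) → ℝ := fun k => f ∘ fun ω => ω k
  have hident : ∀ i, IdentDistrib (X i) (X 0) P P := fun i =>
    IdentDistrib.comp ⟨(measurable_pi_apply i).aemeasurable, (measurable_pi_apply 0).aemeasurable,
      by rw [hP.map_eval, hP.map_eval]⟩ hf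
  have hint : Integrable (X 0) P :=
    (integrable_map_measure hf.aestronglyMeasurable (measurable_pi_apply 0).aemeasurable).1
      (by rwa [hP.map_eval])
  have hmean : ∫ ω, X 0 ω ∂P = ∫ x, f x ∂p := by
    rw [← hP.map_eval 0, integral_map (measurable_pi_apply 0).aemeasurable
      (by rw [hP.map_eval]; exact hf.aestronglyMeasurable)]
    rfl
  have h := strong_law_ae_real X hint (fun i j hij => (hP.indepFun_eval hij).comp hf hf) hident
  rwa [hmean] at h

end IsIIDproduct

lemma exists_measurableSet_measure_eq_one_of_ae {X : Type*} [MeasurableSpace X] {μ : Measure X}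
    [IsProbabilityMeasure μ] {Q : X → Prop} (h : ∀ᵐ x ∂μ, Q x) :
    ∃ s, MeasurableSet s ∧ μ s = 1 ∧ ∀ x ∈ s, Q x := by
  obtain ⟨t, hQt, ht, ht₀⟩ := exists_measurable_superset_of_null (ae_iff.1 h)
  exact ⟨tᶜ, ht.compl, (prob_compl_eq_one_iff ht).2 ht₀,
    fun x hx => not_not.1 fun hQ => hx (hQt hQ)⟩

section EntryProd

variable {ι : Type*} [Fintype ι]

/-- Used instead of the minimal entry, which is undefined for an empty index type. -/
def entryProd (A : Matrix ι ι ℝ) : ℝ :=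
  ∏ ij : ι × ι, A ij.1 ij.2

lemma measurable_entryProd {Ω : Type*} [MeasurableSpace Ω] {R : Ω → Matrix ι ι ℝ}
    (hR : ∀ i j, Measurable fun ω => R ω i j) : Measurable fun ω => entryProd (R ω) :=
  Finset.measurable_prod _ fun ij _ => hR ij.1 ij.2

variable [DecidableEq ι]

lemma entryProd_le_apply {A : Matrix ι ι ℝ} (hA : A ∈ rowStochastic ℝ ι) (i j : ι) :
    entryProd A ≤ A i j := by
  rw [entryProd, ← mul_prod_erase univ (fun ij : ι × ι => A ij.1 ij.2) (mem_univ (i, j))]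
  exact mul_le_of_le_one_right (nonneg_of_mem_rowStochastic hA)
    (prod_le_one (fun _ _ => nonneg_of_mem_rowStochastic hA)
      fun _ _ => le_one_of_mem_rowStochastic hA)

lemma entryProd_nonneg {A : Matrix ι ι ℝ} (hA : A ∈ rowStochastic ℝ ι) : 0 ≤ entryProd A :=
  prod_nonneg fun _ _ => nonneg_of_mem_rowStochastic hA

lemma entryProd_le_one {A : Matrix ι ι ℝ} (hA : A ∈ rowStochastic ℝ ι) : entryProd A ≤ 1 :=
  prod_le_one (fun _ _ => nonneg_of_mem_rowStochastic hA) fun _ _ => le_one_of_mem_rowStochastic hA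

variable {Ω : Type*} [MeasurableSpace Ω] {R : Ω → Matrix ι ι ℝ}

lemma integrable_entryProd {p : Measure Ω} [IsFiniteMeasure p]
    (hR : ∀ ω, R ω ∈ rowStochastic ℝ ι) (hRm : ∀ i j, Measurable fun ω => R ω i j) :
    Integrable (fun ω => entryProd (R ω)) p :=
  .of_bound (measurable_entryProd hRm).aestronglyMeasurable 1 <| ae_of_all _ fun ω => by
    rw [Real.norm_of_nonneg (entryProd_nonneg (hR ω))]
    exact entryProd_le_one (hR ω)

lemma integral_entryProd_pos {p : Measure Ω} [IsFiniteMeasure p]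
    (hR : ∀ ω, R ω ∈ rowStochastic ℝ ι) (hRm : ∀ i j, Measurable fun ω => R ω i j)
    (hpos : 0 < p {ω | ∀ i j, 0 < R ω i j}) :
    0 < ∫ ω, entryProd (R ω) ∂p := by
  rw [integral_pos_iff_support_of_nonneg (fun ω => entryProd_nonneg (hR ω))
    (integrable_entryProd hR hRm)]
  refine hpos.trans_le (measure_mono fun ω hω => ?_)
  exact (prod_pos fun ij _ => hω ij.1 ij.2).ne'

end EntryProd

theorem stmt3
    {Ω : Type} [MeasurableSpace Ω] (p : Measure Ω) [IsProbabilityMeasure p]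
    {d : ℕ} (M : Ω → Matrix (Fin d) (Fin d) ℂ)
    (hMmeas : ∀ i j, Measurable fun ω => M ω i j)
    (hstoch : ∀ ω, (∀ i j, (M ω i j).im = 0 ∧ 0 ≤ (M ω i j).re) ∧ ∀ i, ∑ j, M ω i j = 1)
    (hpos : 0 < p {ω | ∀ i j, 0 < (M ω i j).re})
    (P : Measure (ℕ → Ω)) [IsProbabilityMeasure P] (hP : IsIIDproduct p P) :
    ∃ α : ℝ, 0 < α ∧
      ∃ η : (ℕ → Ω) → Fin d → ℂ, (∀ i, Measurable fun ω' => η ω' i) ∧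
        ∃ Ω₄ : Set (ℕ → Ω), MeasurableSet Ω₄ ∧ P Ω₄ = 1 ∧
          ∀ ω' ∈ Ω₄, ∃ C : ℝ, ∀ n : ℕ, 1 ≤ n →
            opNorm (bwdProd (fun i => M (ω' i)) n -
                ketbra (fun _ => ((Real.sqrt d : ℝ) : ℂ)⁻¹) (η ω'))
              ≤ C * Real.exp (-α * n) := by
  set R : Ω → Matrix (Fin d) (Fin d) ℝ := fun ω => (M ω).map Complex.re
  have hR : ∀ ω, R ω ∈ rowStochastic ℝ (Fin d) := fun ω => map_re_mem_rowStochastic (hstoch ω)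
  have hMR : ∀ ω, M ω = (R ω).map (↑) := fun ω =>
    (map_re_map_ofReal fun i j => ((hstoch ω).1 i j).1).symm
  have hRm : ∀ i j, Measurable fun ω => R ω i j := fun i j =>
    Complex.measurable_re.comp (hMmeas i j)
  have hRm' : ∀ n i j, Measurable fun ω' : ℕ → Ω => R (ω' n) i j := fun n i j =>
    (hRm i j).comp (measurable_pi_apply n)
  set a := ∫ ω, entryProd (R ω) ∂p
  have ha : 0 < a := integral_entryProd_pos hR hRm hpos
  have hdecay : ∀ᵐ ω' ∂P, ∃ C : ℝ, ∀ n : ℕ,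
      opNorm (bwdProd (fun i => M (ω' i)) n -
        ketbra (fun _ => ((Real.sqrt d : ℝ) : ℂ)⁻¹) (etaInfty fun k => R (ω' k)))
        ≤ C * Real.exp (-(a / 2) * n) := by
    filter_upwards [hP.ae_tendsto_average (measurable_entryProd hRm) (integrable_entryProd hR hRm)]
      with ω' hω'
    simp only [hMR]
    exact exists_opNorm_bwdProd_sub_ketbra_le (fun k => hR (ω' k))
      (fun k => entryProd_le_apply (hR (ω' k))) hω' (half_lt_self ha)
  obtain ⟨Ω₄, hΩ₄, hPΩ₄, hbound⟩ := exists_measurableSet_measure_eq_one_of_ae hdecay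
  exact ⟨a / 2, half_pos ha, fun ω' => etaInfty fun k => R (ω' k), measurable_etaInfty hRm',
    Ω₄, hΩ₄, hPΩ₄, fun ω' hω' => (hbound ω' hω').imp fun C hC n _ => hC n⟩

end RRDO
end

section
/- With the notation of the deterministic setting, for every n ≥ 1: Ψₙ = |ψ_S⟩⟨θₙ| + M_{Q₁} M_{Q₂} ⋯ M_{Qₙ}, where θₙ = ψₙ + M_{Qₙ}* ψ_{n−1} + M_{Qₙ}* M_{Q_{n−1}}* ψ_{n−2} + ⋯ + M_{Qₙ}* ⋯ M_{Q₂}* ψ₁, and moreover θₙ = Mₙ* ⋯ M₂* ψ₁ and ⟨ψ_S, θₙ⟩ = 1. -/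
open MeasureTheory Filter Matrix
open scoped BigOperators

/-!
A contraction for a norm has no Jordan block at the eigenvalue `1` (its iterates would grow
linearly), so `P₁(Mⱼ) Mⱼ = P₁(Mⱼ)`. Hence `ψⱼ` is a fixed vector of `Mⱼ*` with
`⟨ψⱼ, ψ_S⟩ = ⟨ψ_S, ψ_S⟩ = 1`, so `Pⱼ` is a projection absorbing `Mⱼ` on both sides and
`M_{Qⱼ} = Mⱼ - Pⱼ`, with `M_{Qⱼ} ψ_S = 0`. Expanding `Ψₙ = Ψₙ₋₁ Mₙ` with these identities gives the
decomposition by induction, `θₙ = Mₙ* θₙ₋₁ = ψₙ + M_{Qₙ}* θₙ₋₁` unrolls to the sum, and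
`⟨ψ_S, θₙ⟩ = ⟨M₂ ⋯ Mₙ ψ_S, ψ₁⟩ = 1`.
-/

namespace Module.End

variable {K V : Type*} [Field K] [AddCommGroup V] [Module K V] {g : Module.End K V}

lemma ker_pow_eq_ker_of_ker_sq_le (hg : LinearMap.ker (g ^ 2) ≤ LinearMap.ker g) {n : ℕ}
    (hn : n ≠ 0) : LinearMap.ker (g ^ n) = LinearMap.ker g := by
  have h12 : LinearMap.ker (g ^ 1) = LinearMap.ker (g ^ (1 : ℕ).succ) :=
    le_antisymm (LinearMap.ker_le_ker_comp _ g) (by simpa using hg)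
  obtain ⟨m, rfl⟩ := Nat.exists_eq_add_of_le' (Nat.pos_of_ne_zero hn)
  rw [add_comm, ← ker_pow_constant h12 m, pow_one]

lemma ker_pow_le_ker_of_ker_sq_le (hg : LinearMap.ker (g ^ 2) ≤ LinearMap.ker g) (n : ℕ) :
    LinearMap.ker (g ^ n) ≤ LinearMap.ker g := by
  rcases eq_or_ne n 0 with rfl | hn
  · simp [Module.End.one_eq_id]
  · exact (ker_pow_eq_ker_of_ker_sq_le hg hn).le

lemma isCompl_ker_pow_range_pow_of_ker_sq_le [FiniteDimensional K V]
    (hg : LinearMap.ker (g ^ 2) ≤ LinearMap.ker g) (n : ℕ) :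
    IsCompl (LinearMap.ker (g ^ n)) (LinearMap.range (g ^ n)) := by
  rcases eq_or_ne n 0 with rfl | hn
  · rw [pow_zero, one_eq_id, LinearMap.ker_id, LinearMap.range_id]
    exact isCompl_bot_top
  refine (Submodule.isCompl_iff_disjoint _ _ ?_).2 ?_
  · rw [add_comm, LinearMap.finrank_range_add_finrank_ker]
  rw [Submodule.disjoint_def]
  rintro _ hx ⟨y, rfl⟩
  have hy : y ∈ LinearMap.ker (g ^ (n + n)) := by
    rwa [LinearMap.mem_ker, pow_add, Module.End.mul_apply]
  rwa [ker_pow_eq_ker_of_ker_sq_le hg (by omega), ← ker_pow_eq_ker_of_ker_sq_le hg hn] at hy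

end Module.End

lemma Matrix.mulVecLin_pow {n R : Type*} [Fintype n] [DecidableEq n] [CommSemiring R]
    (M : Matrix n n R) (k : ℕ) : (M ^ k).mulVecLin = M.mulVecLin ^ k := by
  rw [← toLin'_apply', toLin'_pow, toLin'_apply']

lemma Matrix.mulVecLin_sub_one {n R : Type*} [Fintype n] [DecidableEq n] [CommRing R]
    (M : Matrix n n R) : (M - 1).mulVecLin = M.mulVecLin - 1 := by
  rw [← toLin'_apply', map_sub, toLin'_one, toLin'_apply', Module.End.one_eq_id]

lemma Matrix.eq_sum_prod_mulVec_of_eq_add_mulVec {n α : Type*} [Fintype n] [DecidableEq n]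
    [Semiring α] {x c : ℕ → n → α} {C : ℕ → Matrix n n α} (h0 : x 0 = c 0)
    (hsucc : ∀ m, x (m + 1) = c (m + 1) + C (m + 1) *ᵥ x m) (m : ℕ) :
    x m = ∑ j ∈ Finset.range (m + 1),
      (((List.range' (j + 1) (m - j)).reverse.map C).prod) *ᵥ c j := by
  induction m with
  | zero => simp [h0]
  | succ m ih =>
    have hprod : ∀ j ∈ Finset.range (m + 1),
        C (m + 1) * ((List.range' (j + 1) (m - j)).reverse.map C).prod
          = ((List.range' (j + 1) (m + 1 - j)).reverse.map C).prod := fun j hj => by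
      have hj : j ≤ m := Finset.mem_range_succ_iff.1 hj
      rw [show m + 1 - j = m - j + 1 by omega, List.range'_concat,
        show j + 1 + 1 * (m - j) = m + 1 by omega]
      simp
    rw [hsucc, ih, mulVec_sum, Finset.sum_range_succ _ (m + 1), add_comm]
    simp only [mulVec_mulVec, Nat.sub_self, List.range'_zero, List.reverse_nil, List.map_nil,
      List.prod_nil, one_mulVec]
    exact congrArg (· + c (m + 1)) (Finset.sum_congr rfl fun j hj => by rw [hprod j hj])

namespace RRDO

structure IsNorm {E : Type*} [AddCommGroup E] [Module ℂ E] (N : E → ℝ) : Prop where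
  eq_zero_iff : ∀ x, N x = 0 ↔ x = 0
  add_le : ∀ x y, N (x + y) ≤ N x + N y
  smul : ∀ (c : ℂ) x, N (c • x) = ‖c‖ * N x

namespace IsNorm

variable {E : Type*} [AddCommGroup E] [Module ℂ E] {N : E → ℝ}

lemma neg (hN : IsNorm N) (x : E) : N (-x) = N x := by
  simpa using hN.smul (-1) x

lemma nsmul (hN : IsNorm N) (n : ℕ) (x : E) : N (n • x) = n * N x := by
  simpa [Nat.cast_smul_eq_nsmul] using hN.smul n x

lemma nonneg (hN : IsNorm N) (x : E) : 0 ≤ N x := by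
  have h := hN.add_le x (-x)
  rw [add_neg_cancel, hN.neg, (hN.eq_zero_iff 0).2 rfl] at h
  linarith

lemma eq_zero_of_forall_add_nsmul_le (hN : IsNorm N) {v w : E}
    (h : ∀ n : ℕ, N (v + n • w) ≤ N v) : w = 0 := by
  have hbound : ∀ n : ℕ, n * N w ≤ 2 * N v := fun n => by
    have := hN.add_le (v + n • w) (-v)
    rw [add_neg_cancel_comm, hN.nsmul, hN.neg] at this
    linarith [h n]
  refine (hN.eq_zero_iff w).1 (le_antisymm ?_ (hN.nonneg w))
  by_contra! hw
  obtain ⟨n, hn⟩ := exists_nat_gt (2 * N v / N w)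
  rw [div_lt_iff₀ hw] at hn
  linarith [hbound n]

lemma ker_sub_one_sq_le (hN : IsNorm N) {f : Module.End ℂ E} (hf : ∀ x, N (f x) ≤ N x) :
    LinearMap.ker ((f - 1) ^ 2) ≤ LinearMap.ker (f - 1) := by
  intro v hv
  set w := (f - 1) v
  have hfw : f w = w := by
    rw [LinearMap.mem_ker, pow_two, Module.End.mul_apply] at hv
    rwa [LinearMap.sub_apply, Module.End.one_apply, sub_eq_zero] at hv
  have hfv : f v = v + w := by simp [w]
  have hiter (n : ℕ) : (f ^ n) v = v + n • w := by
    induction n with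
    | zero => simp
    | succ n ih =>
      rw [pow_succ', Module.End.mul_apply, ih, map_add, map_nsmul, hfv, hfw, succ_nsmul]
      abel
  have hpow (n : ℕ) : ∀ x, N ((f ^ n) x) ≤ N x := by
    induction n with
    | zero => simp
    | succ n ih => exact fun x => (ih (f x)).trans (hf x)
  exact hN.eq_zero_of_forall_add_nsmul_le fun n => hiter n ▸ hpow n v

end IsNorm

section Matrix

variable {d : ℕ}

lemma einner_eq_dotProduct (φ χ : Fin d → ℂ) : einner φ χ = star φ ⬝ᵥ χ := rfl

lemma ketbra_eq_vecMulVec (ψ φ : Fin d → ℂ) : ketbra ψ φ = vecMulVec ψ (star φ) := rfl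

lemma einner_mulVec (M : Matrix (Fin d) (Fin d) ℂ) (a b : Fin d → ℂ) :
    einner (M *ᵥ a) b = einner a (Mᴴ *ᵥ b) := by
  rw [einner_eq_dotProduct, einner_eq_dotProduct, star_mulVec, dotProduct_mulVec]

lemma einner_self_eq_one {ψ : Fin d → ℂ} (hψ : evnorm ψ = 1) : einner ψ ψ = 1 := by
  rw [evnorm, Real.sqrt_eq_one] at hψ
  simp only [einner, Complex.conj_mul']
  exact_mod_cast hψ

lemma ketbra_mulVec (a b x : Fin d → ℂ) : ketbra a b *ᵥ x = einner b x • a := by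
  rw [ketbra_eq_vecMulVec, vecMulVec_mulVec, op_smul_eq_smul, einner_eq_dotProduct]

lemma mul_ketbra (M : Matrix (Fin d) (Fin d) ℂ) (a b : Fin d → ℂ) :
    M * ketbra a b = ketbra (M *ᵥ a) b :=
  mul_vecMulVec M a (star b)

lemma ketbra_mul (a b : Fin d → ℂ) (M : Matrix (Fin d) (Fin d) ℂ) :
    ketbra a b * M = ketbra a (Mᴴ *ᵥ b) := by
  rw [ketbra_eq_vecMulVec, vecMulVec_mul, ketbra_eq_vecMulVec, star_mulVec,
    conjTranspose_conjTranspose]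

lemma conjTranspose_ketbra (a b : Fin d → ℂ) : (ketbra a b)ᴴ = ketbra b a := by
  simp [ketbra_eq_vecMulVec]

lemma ketbra_zero_left (b : Fin d → ℂ) : ketbra 0 b = 0 :=
  zero_vecMulVec _

end Matrix

section SpectralProjection

variable {d : ℕ} {M : Matrix (Fin d) (Fin d) ℂ}

/-- The eigenvalue `1` of `M`, if it is one, is semisimple. -/
def IsSemisimpleOne (M : Matrix (Fin d) (Fin d) ℂ) : Prop :=
  LinearMap.ker ((M - 1).mulVecLin ^ 2) ≤ LinearMap.ker (M - 1).mulVecLin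

lemma specProj_mulVec_eq_projectionOnto
    (h : IsCompl (LinearMap.ker ((M - 1) ^ d).mulVecLin)
      (LinearMap.range ((M - 1) ^ d).mulVecLin)) (x : Fin d → ℂ) :
    specProj M *ᵥ x = (Submodule.projectionOnto _ _ h x : Fin d → ℂ) := by
  rw [specProj, dif_pos h, ← toLin'_apply, toLin'_toMatrix']
  rfl

lemma isCompl_ker_range_of_ker_sq_le
    (hM : IsSemisimpleOne M) :
    IsCompl (LinearMap.ker ((M - 1) ^ d).mulVecLin) (LinearMap.range ((M - 1) ^ d).mulVecLin) := by
  rw [mulVecLin_pow]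
  exact Module.End.isCompl_ker_pow_range_pow_of_ker_sq_le hM d

lemma specProj_mulVec_of_mem_ker
    (hM : IsSemisimpleOne M) {x : Fin d → ℂ}
    (hx : x ∈ LinearMap.ker ((M - 1) ^ d).mulVecLin) : specProj M *ᵥ x = x := by
  rw [specProj_mulVec_eq_projectionOnto (isCompl_ker_range_of_ker_sq_le hM),
    Submodule.projectionOnto_apply_left _ ⟨x, hx⟩]

lemma specProj_mulVec_of_mem_range
    (hM : IsSemisimpleOne M) {x : Fin d → ℂ}
    (hx : x ∈ LinearMap.range ((M - 1) ^ d).mulVecLin) : specProj M *ᵥ x = 0 := by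
  rw [specProj_mulVec_eq_projectionOnto (isCompl_ker_range_of_ker_sq_le hM),
    Submodule.projectionOnto_apply_of_mem_right _ hx, Submodule.coe_zero]

/-- `M - 1` kills `ker (M - 1)ᵈ` and maps into `range (M - 1)ᵈ`, which `P₁(M)` annihilates. -/
lemma specProj_mul_sub_one (hM : IsSemisimpleOne M) : specProj M * (M - 1) = 0 := by
  refine ext_of_mulVec_single fun i => ?_
  have hx : Pi.single i 1 ∈ LinearMap.ker ((M - 1) ^ d).mulVecLin ⊔
      LinearMap.range ((M - 1) ^ d).mulVecLin := by
    rw [(isCompl_ker_range_of_ker_sq_le hM).sup_eq_top]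
    exact Submodule.mem_top
  obtain ⟨k, hk, _, ⟨y, rfl⟩, hkr⟩ := Submodule.mem_sup.1 hx
  have hk1 : (M - 1) *ᵥ k = 0 :=
    Module.End.ker_pow_le_ker_of_ker_sq_le hM d (by rwa [← mulVecLin_pow])
  rw [zero_mulVec, ← mulVec_mulVec, ← hkr, mulVec_add, hk1, zero_add]
  refine specProj_mulVec_of_mem_range hM ⟨(M - 1) *ᵥ y, ?_⟩
  simp only [mulVecLin_apply, mulVec_mulVec, pow_mul_comm']

lemma specProj_mul_self (hM : IsSemisimpleOne M) : specProj M * M = specProj M := by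
  rw [← sub_eq_zero, ← mul_sub_one]
  exact specProj_mul_sub_one hM

lemma specProj_mulVec_of_mulVec_eq_self (hM : IsSemisimpleOne M) (hd : d ≠ 0) {ψ : Fin d → ℂ}
    (hψ : M *ᵥ ψ = ψ) :
    specProj M *ᵥ ψ = ψ := by
  refine specProj_mulVec_of_mem_ker hM ?_
  obtain ⟨e, rfl⟩ := Nat.exists_eq_succ_of_ne_zero hd
  rw [LinearMap.mem_ker, mulVecLin_apply, pow_succ, ← mulVec_mulVec, sub_mulVec, hψ,
    one_mulVec, sub_self, mulVec_zero]

lemma conjTranspose_mulVec_psiv (hM : IsSemisimpleOne M) (ψS : Fin d → ℂ) :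
    Mᴴ *ᵥ psiv ψS M = psiv ψS M := by
  rw [psiv, mulVec_mulVec, ← conjTranspose_mul, specProj_mul_self hM]

variable {ψS : Fin d → ℂ}

lemma einner_psiv_left_eq_one (hM : IsSemisimpleOne M) (hd : d ≠ 0) (hψS : evnorm ψS = 1)
    (hfix : M *ᵥ ψS = ψS) : einner (psiv ψS M) ψS = 1 := by
  rw [psiv, einner_mulVec, conjTranspose_conjTranspose,
    specProj_mulVec_of_mulVec_eq_self hM hd hfix, einner_self_eq_one hψS]

lemma einner_psiv_right_eq_one (hM : IsSemisimpleOne M) (hd : d ≠ 0) (hψS : evnorm ψS = 1)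
    (hfix : M *ᵥ ψS = ψS) : einner ψS (psiv ψS M) = 1 := by
  rw [psiv, ← einner_mulVec, specProj_mulVec_of_mulVec_eq_self hM hd hfix,
    einner_self_eq_one hψS]

end SpectralProjection

section Decomposition

variable {d : ℕ} {ψS : Fin d → ℂ}

lemma MQm_mulVec_eq_zero {A : Matrix (Fin d) (Fin d) ℂ} (h1 : einner (psiv ψS A) ψS = 1) :
    MQm ψS A *ᵥ ψS = 0 := by
  rw [MQm, ← mulVec_mulVec, sub_mulVec, one_mulVec, ketbra_mulVec, h1, one_smul, sub_self,
    mulVec_zero]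

lemma MQm_eq_sub_ketbra {A : Matrix (Fin d) (Fin d) ℂ} (hfix : A *ᵥ ψS = ψS)
    (hadj : Aᴴ *ᵥ psiv ψS A = psiv ψS A) (h1 : einner (psiv ψS A) ψS = 1) :
    MQm ψS A = A - ketbra ψS (psiv ψS A) := by
  set P := ketbra ψS (psiv ψS A)
  have hPA : P * A = P := by rw [ketbra_mul, hadj]
  have hAP : A * P = P := by rw [mul_ketbra, hfix]
  have hPP : P * P = P := by rw [mul_ketbra, ketbra_mulVec, h1, one_smul]
  rw [MQm, sub_mul, one_mul, hPA, mul_sub, mul_one, sub_mul, hAP, hPP, sub_self, sub_zero]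

lemma fwdProd_succ (A : ℕ → Matrix (Fin d) (Fin d) ℂ) (n : ℕ) :
    fwdProd A (n + 1) = fwdProd A n * A n := by
  simp [fwdProd, List.range_succ]

variable {Mf : ℕ → Matrix (Fin d) (Fin d) ℂ}

lemma einner_thetaSeq (hfix : ∀ j, Mf j *ᵥ ψS = ψS) (h0 : einner ψS (psiv ψS (Mf 0)) = 1)
    (m : ℕ) :
    einner ψS (thetaSeq Mf ψS m) = 1 := by
  induction m with
  | zero => exact h0
  | succ m ih => rw [thetaSeq, ← einner_mulVec, hfix, ih]

lemma fwdProd_eq_ketbra_thetaSeq_add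
    (hMQ : ∀ j, MQm ψS (Mf j) = Mf j - ketbra ψS (psiv ψS (Mf j)))
    (h1 : ∀ j, einner (psiv ψS (Mf j)) ψS = 1) (m : ℕ) :
    fwdProd Mf (m + 1)
      = ketbra ψS (thetaSeq Mf ψS m) + fwdProd (fun i => MQm ψS (Mf i)) (m + 1) := by
  induction m with
  | zero =>
    rw [fwdProd_succ, fwdProd_succ, hMQ 0]
    simp [fwdProd, thetaSeq]
  | succ m ih =>
    have hkill : fwdProd (fun i => MQm ψS (Mf i)) (m + 1) *ᵥ ψS = 0 := by
      rw [fwdProd_succ, ← mulVec_mulVec, MQm_mulVec_eq_zero (h1 m), mulVec_zero]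
    rw [fwdProd_succ, ih, add_mul, ketbra_mul, fwdProd_succ _ (m + 1), hMQ (m + 1), mul_sub,
      mul_ketbra, hkill, ketbra_zero_left, sub_zero, thetaSeq]

lemma thetaSeq_eq_sum (hfix : ∀ j, Mf j *ᵥ ψS = ψS)
    (hMQ : ∀ j, MQm ψS (Mf j) = Mf j - ketbra ψS (psiv ψS (Mf j)))
    (h0 : einner ψS (psiv ψS (Mf 0)) = 1) (m : ℕ) :
    thetaSeq Mf ψS m
      = ∑ j ∈ Finset.range (m + 1),
          ((((List.range' (j + 1) (m - j)).reverse).map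
              fun i => (MQm ψS (Mf i))ᴴ).prod).mulVec (psiv ψS (Mf j)) := by
  refine eq_sum_prod_mulVec_of_eq_add_mulVec (c := fun j => psiv ψS (Mf j)) rfl (fun m => ?_) m
  have hadj : (Mf (m + 1))ᴴ = ketbra (psiv ψS (Mf (m + 1))) ψS + (MQm ψS (Mf (m + 1)))ᴴ := by
    rw [hMQ, conjTranspose_sub, conjTranspose_ketbra, add_sub_cancel]
  rw [thetaSeq, hadj, add_mulVec, ketbra_mulVec, einner_thetaSeq hfix h0, one_smul]

end Decomposition

theorem stmt4
    {d : ℕ} (Mf : ℕ → Matrix (Fin d) (Fin d) ℂ)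
    (ψS : Fin d → ℂ) (hψS : evnorm ψS = 1)
    (Nm : (Fin d → ℂ) → ℝ)
    (hNm0 : ∀ x, Nm x = 0 ↔ x = 0)
    (hNmadd : ∀ x y, Nm (x + y) ≤ Nm x + Nm y)
    (hNmsmul : ∀ (c : ℂ) (x : Fin d → ℂ), Nm (c • x) = ‖c‖ * Nm x)
    (hcontr : ∀ j x, Nm ((Mf j).mulVec x) ≤ Nm x)
    (hfix : ∀ j, (Mf j).mulVec ψS = ψS)
    :
    ∀ m : ℕ,
      fwdProd Mf (m + 1)
        = ketbra ψS (thetaSeq Mf ψS m) + fwdProd (fun i => MQm ψS (Mf i)) (m + 1) ∧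
      thetaSeq Mf ψS m
        = ∑ j ∈ Finset.range (m + 1),
            ((((List.range' (j + 1) (m - j)).reverse).map
                fun i => (MQm ψS (Mf i))ᴴ).prod).mulVec (psiv ψS (Mf j)) ∧
      einner ψS (thetaSeq Mf ψS m) = 1 := by
  have hd : d ≠ 0 := by
    rintro rfl
    simp [evnorm] at hψS
  have hss (j : ℕ) : IsSemisimpleOne (Mf j) := by
    rw [IsSemisimpleOne, mulVecLin_sub_one]
    exact IsNorm.ker_sub_one_sq_le ⟨hNm0, hNmadd, hNmsmul⟩ (hcontr j)
  have h1 (j : ℕ) := einner_psiv_left_eq_one (hss j) hd hψS (hfix j)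
  have h0 := einner_psiv_right_eq_one (hss 0) hd hψS (hfix 0)
  have hMQ (j : ℕ) := MQm_eq_sub_ketbra (hfix j) (conjTranspose_mulVec_psiv (hss j) ψS) (h1 j)
  exact fun m => ⟨fwdProd_eq_ketbra_thetaSeq_add hMQ h1 m, thetaSeq_eq_sum hfix hMQ h0 m,
    einner_thetaSeq hfix h0 m⟩

end RRDO
end

section
/- Let M : Ω → (d×d complex matrices) be a random reduced dynamics operator, and suppose p({ω : M(ω) ∈ M_(E)}) > 0. Then there exists a d×d complex matrix M₀ ∈ M_(E) with |||M₀ x||| ≤ |||x||| for all x and M₀ ψ_S = ψ_S, such that for every ε > 0, p({ω : ‖M(ω) − M₀‖ < ε}) > 0. -/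
open MeasureTheory Filter Matrix
open scoped BigOperators

namespace RRDO

/-!
Since the space of matrices is second countable, the complement of the support of the law of `M`
is null, so the event `{M ∈ M_(E)}` of positive probability contains some `ω₀` with `M ω₀` in
that support. Then `M₀ := M ω₀` satisfies every condition pointwise, and each `opNorm`-ball around
it is a neighbourhood, hence has positive probability.
-/

open Topology
open scoped Matrix.Norms.L2Operator

theorem exists_mem_forall_mem_nhds_measure_preimage_pos {Ω X : Type*} [MeasurableSpace Ω]
    [TopologicalSpace X] [MeasurableSpace X] [OpensMeasurableSpace X]
    [HereditarilyLindelofSpace X] {μ : Measure Ω} {f : Ω → X} (hf : Measurable f)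
    {s : Set Ω} (hs : 0 < μ s) :
    ∃ ω ∈ s, ∀ U ∈ 𝓝 (f ω), 0 < μ (f ⁻¹' U) := by
  have hfs : 0 < μ.map f (f '' s) :=
    hs.trans_le <| (measure_mono (Set.subset_preimage_image f s)).trans
      (Measure.le_map_apply hf.aemeasurable _)
  obtain ⟨-, ⟨ω, hω, rfl⟩, hsupp⟩ := Measure.nonempty_inter_support_of_pos hfs
  refine ⟨ω, hω, fun U hU => ?_⟩
  obtain ⟨V, hVU, hVopen, hωV⟩ := mem_nhds_iff.1 hU
  calc 0 < μ.map f V := (Measure.mem_support_iff_forall _).1 hsupp V (hVopen.mem_nhds hωV)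
    _ = μ (f ⁻¹' V) := Measure.map_apply hf hVopen.measurableSet
    _ ≤ μ (f ⁻¹' U) := measure_mono (Set.preimage_mono hVU)

theorem evnorm_eq_norm_toLp {d : ℕ} (v : Fin d → ℂ) : evnorm v = ‖WithLp.toLp 2 v‖ := by
  simp [evnorm, EuclideanSpace.norm_eq]

theorem opNorm_le_l2_opNorm {d : ℕ} (A : Matrix (Fin d) (Fin d) ℂ) : opNorm A ≤ ‖A‖ := by
  refine Real.iSup_le (fun ⟨v, hv⟩ => ?_) (norm_nonneg A)
  rw [evnorm_eq_norm_toLp] at hv ⊢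
  simpa using (l2_opNorm_mulVec A (WithLp.toLp 2 v)).trans
    (mul_le_of_le_one_right (norm_nonneg A) hv)

theorem setOf_opNorm_sub_lt_mem_nhds {d : ℕ} (M₀ : Matrix (Fin d) (Fin d) ℂ) {ε : ℝ}
    (hε : 0 < ε) : {A | opNorm (A - M₀) < ε} ∈ 𝓝 M₀ :=
  Filter.mem_of_superset (Metric.ball_mem_nhds M₀ hε) fun A hA =>
    (opNorm_le_l2_opNorm _).trans_lt (by rwa [Metric.mem_ball, dist_eq_norm] at hA)

theorem stmt9_general
    {Ω : Type} [MeasurableSpace Ω] (p : Measure Ω)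
    {d : ℕ} (M : Ω → Matrix (Fin d) (Fin d) ℂ)
    (hMmeas : ∀ i j, Measurable fun ω => M ω i j)
    (ψS : Fin d → ℂ)
    (Nm : (Fin d → ℂ) → ℝ)
    (hcontr : ∀ ω x, Nm ((M ω).mulVec x) ≤ Nm x)
    (hfix : ∀ ω, (M ω).mulVec ψS = ψS)
    (hpos : 0 < p {ω | M ω ∈ MsetE d})
    :
    ∃ M₀ : Matrix (Fin d) (Fin d) ℂ, M₀ ∈ MsetE d ∧
      (∀ x, Nm (M₀.mulVec x) ≤ Nm x) ∧ M₀.mulVec ψS = ψS ∧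
      ∀ ε : ℝ, 0 < ε → 0 < p {ω | opNorm (M ω - M₀) < ε} := by
  obtain ⟨ω₀, hω₀, hnhds⟩ := exists_mem_forall_mem_nhds_measure_preimage_pos
    -- Mathlib puts no measurable structure on `Matrix`; the law lives on the array of entries.
    (X := Fin d → Fin d → ℂ) (f := M)
    (measurable_pi_lambda _ fun i => measurable_pi_lambda _ (hMmeas i)) hpos
  exact ⟨M ω₀, hω₀, hcontr ω₀, hfix ω₀, fun ε hε =>
    hnhds _ (setOf_opNorm_sub_lt_mem_nhds (M ω₀) hε)⟩

theorem stmt9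
    {Ω : Type} [MeasurableSpace Ω] (p : Measure Ω) [IsProbabilityMeasure p]
    {d : ℕ} (M : Ω → Matrix (Fin d) (Fin d) ℂ)
    (hMmeas : ∀ i j, Measurable fun ω => M ω i j)
    (ψS : Fin d → ℂ) (hψS : evnorm ψS = 1)
    (Nm : (Fin d → ℂ) → ℝ)
    (hNm0 : ∀ x, Nm x = 0 ↔ x = 0)
    (hNmadd : ∀ x y, Nm (x + y) ≤ Nm x + Nm y)
    (hNmsmul : ∀ (c : ℂ) (x : Fin d → ℂ), Nm (c • x) = ‖c‖ * Nm x)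
    (hcontr : ∀ ω x, Nm ((M ω).mulVec x) ≤ Nm x)
    (hfix : ∀ ω, (M ω).mulVec ψS = ψS)
    (hpos : 0 < p {ω | M ω ∈ MsetE d})
    :
    ∃ M₀ : Matrix (Fin d) (Fin d) ℂ, M₀ ∈ MsetE d ∧
      (∀ x, Nm (M₀.mulVec x) ≤ Nm x) ∧ M₀.mulVec ψS = ψS ∧
      ∀ ε : ℝ, 0 < ε → 0 < p {ω | opNorm (M ω - M₀) < ε} :=
  stmt9_general p M hMmeas ψS Nm hcontr hfix hpos

end RRDO
end
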